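/- For any negative programs N (all body literals negated) and any answer set program R, N ∘ R = horn(N) ∘ (not R), where horn(N) replaces each literal 'not a' in bodies of N by the atom a. -/
import Mathlib


open Classical Finset

/-- A rule of an answer set program: a head atom, a set of positive body atoms,
and a set of negated body atoms. -/
structure Rule (α : Type*) where
  head : α
  pos : Finset α
  neg : Finset α
deriving DecidableEq

instance {α : Type*} [DecidableEq α] [Fintype α] : Fintype (Rule α) :=
  Fintype.ofEquiv (α × Finset α × Finset α)
    { toFun := fun x => ⟨x.1, x.2.1, x.2.2⟩
      invFun := fun r => (r.head, r.pos, r.neg)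
      left_inv := fun _ => rfl
      right_inv := fun _ => rfl }

variable {α : Type*} [Fintype α] [DecidableEq α]

/-- Program-level negation (the tf/∨/De Morgan construction):
for each head atom `a`, either no rule of `R` has head `a` (then the fact `a` is produced),
or one negated literal is chosen from the body of each rule of `R` with head `a`
(De Morgan + distributivity); heads of facts of `R` are dropped (their body `{t}` negates to `f`). -/
noncomputable def notProg {α : Type*} [Fintype α] [DecidableEq α]
    (R : Finset (Rule α)) : Finset (Rule α) :=
  Finset.univ.filter (fun t =>
    ((∀ s ∈ R, s.head ≠ t.head) ∧ t.pos = ∅ ∧ t.neg = ∅) ∨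
    ((∃ s ∈ R, s.head = t.head) ∧
      ∃ c : Rule α → α ⊕ α,
        (∀ s ∈ R, s.head = t.head →
          Sum.elim (fun b => b ∈ s.pos) (fun b => b ∈ s.neg) (c s)) ∧
        t.pos.image Sum.inl ∪ t.neg.image Sum.inr =
          (R.filter (fun s => s.head = t.head)).image (fun s => Sum.swap (c s))))

/-- Sequential composition of answer set programs. -/
noncomputable def comp {α : Type*} [Fintype α] [DecidableEq α]
    (P R : Finset (Rule α)) : Finset (Rule α) :=
  Finset.univ.filter (fun t => ∃ r ∈ P, ∃ S N : Finset (Rule α),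
    S ⊆ R ∧ N ⊆ notProg R ∧
    S.card = r.pos.card ∧ N.card = r.neg.card ∧
    S.image Rule.head = r.pos ∧ N.image Rule.head = r.neg ∧
    t.head = r.head ∧
    t.pos = (S ∪ N).sup Rule.pos ∧
    t.neg = (S ∪ N).sup Rule.neg)

/-- The unit program `1_A = {a ← a : a ∈ A}`. -/
def unitP (α : Type*) [Fintype α] [DecidableEq α] : Finset (Rule α) :=
  Finset.univ.image (fun a => (⟨a, {a}, ∅⟩ : Rule α))

/-- An interpretation viewed as a fact program. -/
def interp {α : Type*} [Fintype α] [DecidableEq α] (I : Finset α) : Finset (Rule α) :=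
  I.image (fun a => (⟨a, ∅, ∅⟩ : Rule α))

/-- The facts (rules with empty body) of a program. -/
noncomputable def factsOf {α : Type*} [Fintype α] [DecidableEq α]
    (P : Finset (Rule α)) : Finset (Rule α) :=
  P.filter (fun r => r.pos = ∅ ∧ r.neg = ∅)

/-- The van Emden–Kowalski immediate consequence operator. -/
noncomputable def TP {α : Type*} [Fintype α] [DecidableEq α]
    (P : Finset (Rule α)) (I : Finset α) : Finset α :=
  (P.filter (fun r => r.pos ⊆ I ∧ Disjoint r.neg I)).image Rule.head

/-- The hornification of a program: each negated body literal `not a` becomes the atom `a`. -/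
def hornP {α : Type*} [Fintype α] [DecidableEq α] (N : Finset (Rule α)) : Finset (Rule α) :=
  N.image (fun r => (⟨r.head, r.pos ∪ r.neg, ∅⟩ : Rule α))

/-- for a negative program `N`, `N ∘ R = horn(N) ∘ (not R)`. -/
theorem negative_comp {α : Type*} [Fintype α] [DecidableEq α]
    (N R : Finset (Rule α)) (hN : ∀ r ∈ N, r.pos = ∅) :
    comp N R = comp (hornP N) (notProg R) := by
  ext t
  simp only [comp, mem_filter, mem_univ, true_and]
  constructor
  · rintro ⟨r, hr, S, Ns, hSR, hNR, hScard, hNcard, hShead, hNhead, hhead, hpos, hneg⟩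
    have hrpos := hN r hr
    have hS : S = ∅ := by
      have : S.card = 0 := by rw [hScard, hrpos]; simp
      exact Finset.card_eq_zero.mp this
    subst hS
    refine ⟨⟨r.head, r.pos ∪ r.neg, ∅⟩, ?_, Ns, ∅, hNR, by simp, ?_, by simp, ?_, by simp,
      hhead, ?_, ?_⟩
    · exact Finset.mem_image_of_mem _ hr
    · simpa [hrpos] using hNcard
    · simpa [hrpos] using hNhead
    · simpa using hpos
    · simpa using hneg
  · rintro ⟨r', hr', S, Ns, hSR, hNR, hScard, hNcard, hShead, hNhead, hhead, hpos, hneg⟩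
    simp only [hornP, mem_image] at hr'
    obtain ⟨r, hr, rfl⟩ := hr'
    have hrpos := hN r hr
    have hNs : Ns = ∅ := by
      have : Ns.card = 0 := by rw [hNcard]; simp
      exact Finset.card_eq_zero.mp this
    subst hNs
    refine ⟨r, hr, ∅, S, by simp, hSR, by simp [hrpos], ?_, by simp [hrpos], ?_,
      hhead, ?_, ?_⟩
    · simpa [hrpos] using hScard
    · simpa [hrpos] using hShead
    · simpa using hpos
    · simpa using hneg
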